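/- arXiv:2211.01822 — 4 statements merged into one kernel-verified Lean document; each statement's English description precedes it below -/
import Mathlib

section
/- Substituting the control law u_pidz = u_pi + u_dz into the fully-actuated mechanical port-Hamiltonian system yields a closed loop that preserves the mechanical port-Hamiltonian structure: for all (q,p), the closed-loop vector field satisfies q̇ = ∇_p H_d(q,p) and ṗ = −∇_q H_d(q,p) − (D(q,p) + K_P) ∇_p H_d(q,p), where H_d(q,p) := ½ pᵀ M(q)⁻¹ p + ½ (q−q⋆)ᵀ K_I (q−q⋆) + Σ_{i=1}^n (k_i/μ_i)·ln(cosh(μ_i (q_i−q⋆_i))). Equivalently: −∇_q H(q,p) − D(q,p) M(q)⁻¹ p + G·u_pidz(q,p) + β = −∇_q H_d(q,p) − (D(q,p) + K_P) M(q)⁻¹ p. -/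
open Matrix

/-!
The control cancels `∇U` and `β`, and `G` undoes its `G⁻¹`, so the closed loop differs from the
open loop by `−K_P M⁻¹p − K_I (q−q⋆) − K_Z tanh(μ(q−q⋆))`. The last two terms are the
`q`-gradients of the potentials added in `H_d`: a quadratic form with symmetric `K_I` has
gradient `K_I (q−q⋆)`, and `(k/μ) log cosh(μ s)` has derivative `k tanh(μ s)`. The kinetic
energy `½ pᵀ M(q)⁻¹ p` is common to `H` and `H_d`, so its `q`-gradient cancels; it only has to
exist, which the adjugate formula for `M(q)⁻¹` provides. Its `p`-gradient is `M(q)⁻¹ p` since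
`M(q)⁻¹` is symmetric.
-/

/-- The `i`-th component of the gradient of a scalar function on `ℝⁿ`. -/
noncomputable def grad {n : ℕ} (f : (Fin n → ℝ) → ℝ) (x : Fin n → ℝ) : Fin n → ℝ :=
  fun i => fderiv ℝ f x (Pi.single i 1)

/-- The desired (shaped) Hamiltonian
`H_d(q,p) = ½ pᵀ M(q)⁻¹ p + ½ (q−q⋆)ᵀ K_I (q−q⋆) + Σᵢ (kᵢ/μᵢ) ln cosh(μᵢ(qᵢ−q⋆ᵢ))`. -/
noncomputable def Hdes {n : ℕ} (M : (Fin n → ℝ) → Matrix (Fin n) (Fin n) ℝ)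
    (KI : Matrix (Fin n) (Fin n) ℝ) (k μ qstar : Fin n → ℝ) (q p : Fin n → ℝ) : ℝ :=
  (1 / 2) * (p ⬝ᵥ ((M q)⁻¹ *ᵥ p)) + (1 / 2) * ((q - qstar) ⬝ᵥ (KI *ᵥ (q - qstar)))
    + ∑ i, (k i / μ i) * Real.log (Real.cosh (μ i * (q i - qstar i)))

section Determinant

variable {𝕜 E ι : Type*} [NontriviallyNormedField 𝕜] [NormedAddCommGroup E] [NormedSpace 𝕜 E]
  [Fintype ι] [DecidableEq ι] {N : E → Matrix ι ι 𝕜} {x : E}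

lemma differentiableAt_det (hN : ∀ i j, DifferentiableAt 𝕜 (fun y => N y i j) x) :
    DifferentiableAt 𝕜 (fun y => (N y).det) x := by
  simp only [det_apply']
  fun_prop

lemma differentiableAt_adjugate_apply (hN : ∀ i j, DifferentiableAt 𝕜 (fun y => N y i j) x)
    (i j : ι) : DifferentiableAt 𝕜 (fun y => (N y).adjugate i j) x := by
  simp only [adjugate_apply]
  refine differentiableAt_det fun a b => ?_
  by_cases ha : a = j
  · simp [updateRow_apply, ha]
  · simpa [updateRow_apply, ha] using hN a b

lemma differentiableAt_inv_apply (hN : ∀ i j, DifferentiableAt 𝕜 (fun y => N y i j) x)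
    (hdet : (N x).det ≠ 0) (i j : ι) : DifferentiableAt 𝕜 (fun y => (N y)⁻¹ i j) x := by
  have := differentiableAt_det hN
  have := differentiableAt_adjugate_apply hN i j
  simp only [inv_def, Ring.inverse_eq_inv', Matrix.smul_apply, smul_eq_mul]
  fun_prop (disch := exact hdet)

lemma differentiableAt_dotProduct_inv_mulVec
    (hN : ∀ i j, DifferentiableAt 𝕜 (fun y => N y i j) x) (hdet : (N x).det ≠ 0) (p : ι → 𝕜) :
    DifferentiableAt 𝕜 (fun y => p ⬝ᵥ ((N y)⁻¹ *ᵥ p)) x := by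
  simp only [dotProduct, mulVec]
  exact DifferentiableAt.fun_sum fun i _ => (DifferentiableAt.fun_sum fun j _ =>
    (differentiableAt_inv_apply hN hdet i j).mul_const _).const_mul _

end Determinant

lemma Matrix.diagonal_mulVec_inv_mulVec {ι K : Type*} [Fintype ι] [DecidableEq ι] [Field K]
    {d : ι → K} (hd : ∀ i, d i ≠ 0) (w : ι → K) : diagonal d *ᵥ ((diagonal d)⁻¹ *ᵥ w) = w := by
  have hdet : IsUnit (diagonal d).det := by
    rw [det_diagonal]
    exact (Finset.prod_ne_zero_iff.mpr fun i _ => hd i).isUnit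
  rw [mulVec_mulVec, mul_nonsing_inv _ hdet, one_mulVec]

lemma Matrix.diagonal_mulVec_sum_smul_single {ι R : Type*} [Fintype ι] [DecidableEq ι]
    [Semiring R] (d t : ι → R) : diagonal d *ᵥ ∑ i, t i • Pi.single i 1 = fun i => d i * t i := by
  simp_rw [← Pi.single_smul, smul_eq_mul, mul_one, Finset.univ_sum_single]
  exact funext (mulVec_diagonal d t)

lemma hasDerivAt_div_mul_log_cosh (k μ c t : ℝ) :
    HasDerivAt (fun s => k / μ * Real.log (Real.cosh (μ * (s - c))))
      (k * Real.tanh (μ * (t - c))) t := by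
  -- at `μ = 0` both sides vanish, since `k / 0 = 0` and `tanh 0 = 0`
  rcases eq_or_ne μ 0 with rfl | hμ
  · simpa using hasDerivAt_const t (0 : ℝ)
  have hinner : HasDerivAt (fun s => μ * (s - c)) μ t := by
    simpa using ((hasDerivAt_id t).sub_const c).const_mul μ
  have hcosh := (Real.hasDerivAt_cosh _).comp t hinner
  have hlog := ((Real.hasDerivAt_log (Real.cosh_pos (μ * (t - c))).ne').comp t hcosh).const_mul
    (k / μ)
  refine hlog.congr_deriv ?_
  rw [Real.tanh_eq_sinh_div_cosh]
  field_simp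

section Gradient

variable {n : ℕ} {f g : (Fin n → ℝ) → ℝ} {x : Fin n → ℝ}

lemma grad_add (hf : DifferentiableAt ℝ f x) (hg : DifferentiableAt ℝ g x) :
    grad (fun y => f y + g y) x = grad f x + grad g x := by
  ext i
  simp [grad, fderiv_fun_add hf hg]

lemma grad_add_const (c : ℝ) : grad (fun y => f y + c) x = grad f x := by
  ext i
  simp [grad, fderiv_add_const]

lemma grad_const_mul (hf : DifferentiableAt ℝ f x) (c : ℝ) :
    grad (fun y => c * f y) x = c • grad f x := by
  ext i
  simp [grad, fderiv_const_mul hf]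

lemma grad_comp_sub_const (c : Fin n → ℝ) : grad (fun y => f (y - c)) x = grad f (x - c) := by
  ext i
  simp [grad, fderiv_comp_sub]

lemma grad_eq_of_hasFDerivAt {w : Fin n → ℝ}
    (h : HasFDerivAt f (∑ i, w i • (ContinuousLinearMap.proj i : (Fin n → ℝ) →L[ℝ] ℝ)) x) :
    grad f x = w := by
  ext m
  simp [grad, h.fderiv, Pi.single_apply]

lemma hasFDerivAt_sum_apply {φ : Fin n → ℝ → ℝ} {w : Fin n → ℝ}
    (hφ : ∀ i, HasDerivAt (φ i) (w i) (x i)) :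
    HasFDerivAt (fun y => ∑ i, φ i (y i))
      (∑ i, w i • (ContinuousLinearMap.proj i : (Fin n → ℝ) →L[ℝ] ℝ)) x :=
  HasFDerivAt.fun_sum fun i _ => (hφ i).comp_hasFDerivAt x (hasFDerivAt_apply i x)

lemma hasFDerivAt_dotProduct_mulVec (A : Matrix (Fin n) (Fin n) ℝ) (x : Fin n → ℝ) :
    HasFDerivAt (fun y => y ⬝ᵥ (A *ᵥ y))
      (∑ i, ((Aᵀ + A) *ᵥ x) i • (ContinuousLinearMap.proj i : (Fin n → ℝ) →L[ℝ] ℝ)) x := by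
  let L : (Fin n → ℝ) →L[ℝ] Fin n → ℝ := (mulVecLin A).toContinuousLinearMap
  have h : HasFDerivAt (fun y : Fin n → ℝ => ∑ i, y i * L y i) _ x :=
    HasFDerivAt.fun_sum (u := Finset.univ) fun i _ =>
      (hasFDerivAt_apply i x).mul ((ContinuousLinearMap.proj i).comp L).hasFDerivAt
  refine h.congr_fderiv (ContinuousLinearMap.ext fun v => ?_)
  have hx : x ⬝ᵥ (A *ᵥ v) = (Aᵀ *ᵥ x) ⬝ᵥ v := by rw [dotProduct_mulVec, mulVec_transpose]
  simpa [L, add_mulVec, Finset.sum_add_distrib, add_mul, dotProduct] using hx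

lemma grad_half_dotProduct_mulVec {A : Matrix (Fin n) (Fin n) ℝ} (hA : A.IsSymm) :
    grad (fun y => 1 / 2 * (y ⬝ᵥ (A *ᵥ y))) x = A *ᵥ x := by
  rw [grad_const_mul (hasFDerivAt_dotProduct_mulVec A x).differentiableAt,
    grad_eq_of_hasFDerivAt (hasFDerivAt_dotProduct_mulVec A x), hA.eq, add_mulVec, ← two_smul ℝ,
    smul_smul]
  norm_num

lemma hasFDerivAt_sum_div_mul_log_cosh (k μ c : Fin n → ℝ) :
    HasFDerivAt (fun y => ∑ i, k i / μ i * Real.log (Real.cosh (μ i * (y i - c i))))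
      (∑ i, (k i * Real.tanh (μ i * (x i - c i))) •
        (ContinuousLinearMap.proj i : (Fin n → ℝ) →L[ℝ] ℝ)) x :=
  hasFDerivAt_sum_apply (φ := fun i s => k i / μ i * Real.log (Real.cosh (μ i * (s - c i))))
    fun _ => hasDerivAt_div_mul_log_cosh _ _ _ _

end Gradient

theorem deadzone_closed_loop_pH_structure_general {n : ℕ}
    (qstar β : Fin n → ℝ)
    (M : (Fin n → ℝ) → Matrix (Fin n) (Fin n) ℝ)
    (hM : ∀ i j, ContDiff ℝ 2 (fun q => M q i j))
    (hMpd : ∀ q, (M q).PosDef)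
    (U : (Fin n → ℝ) → ℝ) (hU : ContDiff ℝ 1 U)
    (D : (Fin n → ℝ) → (Fin n → ℝ) → Matrix (Fin n) (Fin n) ℝ)
    (g : Fin n → ℝ) (hg : ∀ i, g i ≠ 0)
    (G : Matrix (Fin n) (Fin n) ℝ) (hG : G = Matrix.diagonal g)
    (KP KI : Matrix (Fin n) (Fin n) ℝ) (hKI : KI.PosDef)
    (k μ : Fin n → ℝ)
    (KZ : Matrix (Fin n) (Fin n) ℝ) (hKZ : KZ = Matrix.diagonal k)
    -- the open-loop Hamiltonian H(q,p) = ½ pᵀ M(q)⁻¹ p + U(q)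
    (H : (Fin n → ℝ) → (Fin n → ℝ) → ℝ)
    (hH : H = fun q p => (1 / 2) * (p ⬝ᵥ ((M q)⁻¹ *ᵥ p)) + U q)
    -- the PI-PBC part u_pi = −G⁻¹(K_P M(q)⁻¹ p + K_I (q−q⋆) − ∇U(q))
    (upi : (Fin n → ℝ) → (Fin n → ℝ) → Fin n → ℝ)
    (hupi : upi = fun q p =>
      -(G⁻¹ *ᵥ (KP *ᵥ ((M q)⁻¹ *ᵥ p) + KI *ᵥ (q - qstar) - grad U q)))
    -- the dead-zone compensation part u_dz = −G⁻¹(K_Z Σᵢ eᵢ tanh(μᵢ(qᵢ−q⋆ᵢ)) + β)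
    (udz : (Fin n → ℝ) → Fin n → ℝ)
    (hudz : udz = fun q =>
      -(G⁻¹ *ᵥ (KZ *ᵥ (∑ i, Real.tanh (μ i * (q i - qstar i)) • (Pi.single i 1 : Fin n → ℝ)) + β)))
    (upidz : (Fin n → ℝ) → (Fin n → ℝ) → Fin n → ℝ)
    (hupidz : upidz = fun q p => upi q p + udz q) :
    (∀ q p : Fin n → ℝ,
      grad (fun p' => Hdes M KI k μ qstar q p') p = (M q)⁻¹ *ᵥ p) ∧
    (∀ q p : Fin n → ℝ,
      -(grad (fun q' => H q' p) q) - (D q p) *ᵥ ((M q)⁻¹ *ᵥ p) + G *ᵥ (upidz q p) + β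
        = -(grad (fun q' => Hdes M KI k μ qstar q' p) q)
          - (D q p + KP) *ᵥ ((M q)⁻¹ *ᵥ p)) := by
  subst hupidz hupi hudz hH hG hKZ
  have hKIsymm : KI.IsSymm := isHermitian_iff_isSymm.mp hKI.isHermitian
  refine ⟨fun q p => ?_, fun q p => ?_⟩
  · simp only [Hdes]
    rw [grad_add_const, grad_add_const,
      grad_half_dotProduct_mulVec (isHermitian_iff_isSymm.mp (hMpd q).isHermitian.inv)]
  have hkinetic : DifferentiableAt ℝ (fun q' => 1 / 2 * (p ⬝ᵥ ((M q')⁻¹ *ᵥ p))) q :=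
    (differentiableAt_dotProduct_inv_mulVec
      (fun i j => ((hM i j).differentiable (by norm_num)).differentiableAt)
      (hMpd q).det_pos.ne' p).const_mul _
  have hquad : DifferentiableAt ℝ (fun y => 1 / 2 * ((y - qstar) ⬝ᵥ (KI *ᵥ (y - qstar)))) q :=
    ((hasFDerivAt_dotProduct_mulVec KI (q - qstar)).differentiableAt.comp q
      (differentiableAt_id.sub_const qstar)).const_mul _
  have hlogcosh := hasFDerivAt_sum_div_mul_log_cosh (x := q) k μ qstar
  have hgradH := grad_add hkinetic ((hU.differentiable (by norm_num)).differentiableAt)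
  have hgradHdes : grad (fun q' => Hdes M KI k μ qstar q' p) q
      = grad (fun q' => 1 / 2 * (p ⬝ᵥ ((M q')⁻¹ *ᵥ p))) q + KI *ᵥ (q - qstar)
        + fun i => k i * Real.tanh (μ i * (q i - qstar i)) := by
    simp only [Hdes]
    rw [grad_add (hkinetic.fun_add hquad) hlogcosh.differentiableAt, grad_add hkinetic hquad,
      grad_comp_sub_const (f := fun y => 1 / 2 * (y ⬝ᵥ (KI *ᵥ y))),
      grad_half_dotProduct_mulVec hKIsymm, grad_eq_of_hasFDerivAt hlogcosh]
  rw [hgradH, hgradHdes, mulVec_add, mulVec_neg, mulVec_neg, diagonal_mulVec_inv_mulVec hg,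
    diagonal_mulVec_inv_mulVec hg, diagonal_mulVec_sum_smul_single, add_mulVec]
  abel

/-- substituting `u_pidz = u_pi + u_dz` into the fully-actuated mechanical
port-Hamiltonian system yields the closed-loop port-Hamiltonian form with Hamiltonian `H_d`:
`q̇ = ∇_p H_d` and `ṗ = −∇_q H_d − (D + K_P) ∇_p H_d`, i.e.
`−∇_q H − D M⁻¹ p + G u_pidz + β = −∇_q H_d − (D + K_P) M⁻¹ p`. -/
theorem deadzone_closed_loop_pH_structure {n : ℕ} (hn : 1 ≤ n)
    (qstar β : Fin n → ℝ)
    (M : (Fin n → ℝ) → Matrix (Fin n) (Fin n) ℝ)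
    (hM : ∀ i j, ContDiff ℝ 2 (fun q => M q i j))
    (hMpd : ∀ q, (M q).PosDef)
    (U : (Fin n → ℝ) → ℝ) (hU : ContDiff ℝ 1 U)
    (D : (Fin n → ℝ) → (Fin n → ℝ) → Matrix (Fin n) (Fin n) ℝ)
    (hD : ∀ q p, (D q p).PosSemidef)
    (g : Fin n → ℝ) (hg : ∀ i, g i ≠ 0)
    (G : Matrix (Fin n) (Fin n) ℝ) (hG : G = Matrix.diagonal g)
    (KP KI : Matrix (Fin n) (Fin n) ℝ) (hKP : KP.PosDef) (hKI : KI.PosDef)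
    (k μ : Fin n → ℝ) (hk : ∀ i, 0 < k i) (hμ : ∀ i, 0 < μ i)
    (KZ : Matrix (Fin n) (Fin n) ℝ) (hKZ : KZ = Matrix.diagonal k)
    -- the open-loop Hamiltonian H(q,p) = ½ pᵀ M(q)⁻¹ p + U(q)
    (H : (Fin n → ℝ) → (Fin n → ℝ) → ℝ)
    (hH : H = fun q p => (1 / 2) * (p ⬝ᵥ ((M q)⁻¹ *ᵥ p)) + U q)
    -- the PI-PBC part u_pi = −G⁻¹(K_P M(q)⁻¹ p + K_I (q−q⋆) − ∇U(q))
    (upi : (Fin n → ℝ) → (Fin n → ℝ) → Fin n → ℝ)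
    (hupi : upi = fun q p =>
      -(G⁻¹ *ᵥ (KP *ᵥ ((M q)⁻¹ *ᵥ p) + KI *ᵥ (q - qstar) - grad U q)))
    -- the dead-zone compensation part u_dz = −G⁻¹(K_Z Σᵢ eᵢ tanh(μᵢ(qᵢ−q⋆ᵢ)) + β)
    (udz : (Fin n → ℝ) → Fin n → ℝ)
    (hudz : udz = fun q =>
      -(G⁻¹ *ᵥ (KZ *ᵥ (∑ i, Real.tanh (μ i * (q i - qstar i)) • (Pi.single i 1 : Fin n → ℝ)) + β)))
    (upidz : (Fin n → ℝ) → (Fin n → ℝ) → Fin n → ℝ)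
    (hupidz : upidz = fun q p => upi q p + udz q) :
    (∀ q p : Fin n → ℝ,
      grad (fun p' => Hdes M KI k μ qstar q p') p = (M q)⁻¹ *ᵥ p) ∧
    (∀ q p : Fin n → ℝ,
      -(grad (fun q' => H q' p) q) - (D q p) *ᵥ ((M q)⁻¹ *ᵥ p) + G *ᵥ (upidz q p) + β
        = -(grad (fun q' => Hdes M KI k μ qstar q' p) q)
          - (D q p + KP) *ᵥ ((M q)⁻¹ *ᵥ p)) :=
  deadzone_closed_loop_pH_structure_general qstar β M hM hMpd U hU D g hg G hG KP KI hKI k μ KZ hKZ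
    H hH upi hupi udz hudz upidz hupidz
end

section
/- If v ∈ ℝⁿ satisfies K_I v + Σ_{i=1}^n e_i k_i tanh(μ_i v_i) = 0, then v = 0. (This is the characterization of the largest invariant set in LaSalle's argument: the shaped potential force vanishes only at the desired configuration.) -/
open Matrix

namespace Real

lemma tanh_nonneg {x : ℝ} (hx : 0 ≤ x) : 0 ≤ tanh x := by
  rw [tanh_eq_sinh_div_cosh]
  exact div_nonneg (sinh_nonneg_iff.2 hx) (cosh_pos x).le

lemma tanh_nonpos {x : ℝ} (hx : x ≤ 0) : tanh x ≤ 0 := by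
  rw [tanh_eq_sinh_div_cosh]
  exact div_nonpos_of_nonpos_of_nonneg (sinh_nonpos_iff.2 hx) (cosh_pos x).le

lemma mul_tanh_mul_self_nonneg {a : ℝ} (ha : 0 ≤ a) (x : ℝ) : 0 ≤ x * tanh (a * x) := by
  rcases le_total 0 x with hx | hx
  · exact mul_nonneg hx (tanh_nonneg (mul_nonneg ha hx))
  · exact mul_nonneg_of_nonpos_of_nonpos hx (tanh_nonpos (mul_nonpos_of_nonneg_of_nonpos ha hx))

end Real

/-- If `v ⬝ᵥ f ≥ 0`, then `v ⬝ᵥ (A v + f) > 0` for every `v ≠ 0`, so `A v + f` cannot vanish. -/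
theorem Matrix.PosDef.eq_zero_of_mulVec_add_eq_zero {ι : Type*} [Fintype ι]
    {A : Matrix ι ι ℝ} (hA : A.PosDef) {v f : ι → ℝ} (hf : 0 ≤ v ⬝ᵥ f)
    (h : A *ᵥ v + f = 0) : v = 0 := by
  by_contra hv
  have hquad : 0 < v ⬝ᵥ (A *ᵥ v) := by simpa using hA.dotProduct_mulVec_pos hv
  have hzero : v ⬝ᵥ (A *ᵥ v) + v ⬝ᵥ f = 0 := by rw [← dotProduct_add, h, dotProduct_zero]
  linarith

theorem shaped_force_vanishes_only_at_origin_general {n : ℕ}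
    (KI : Matrix (Fin n) (Fin n) ℝ) (hKI : KI.PosDef)
    (k μ : Fin n → ℝ) (hk : ∀ i, 0 ≤ k i) (hμ : ∀ i, 0 < μ i)
    (v : Fin n → ℝ)
    (hv : KI *ᵥ v + ∑ i, (k i * Real.tanh (μ i * v i)) • (Pi.single i 1 : Fin n → ℝ) = 0) :
    v = 0 := by
  rw [← pi_eq_sum_univ' fun i ↦ k i * Real.tanh (μ i * v i)] at hv
  refine hKI.eq_zero_of_mulVec_add_eq_zero (Finset.sum_nonneg fun i _ ↦ ?_) hv
  rw [mul_left_comm]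
  exact mul_nonneg (hk i) (Real.mul_tanh_mul_self_nonneg (hμ i).le (v i))

/-- if `K_I v + Σᵢ eᵢ kᵢ tanh(μᵢ vᵢ) = 0` with `K_I` symmetric positive
definite, `kᵢ ≥ 0` and `μᵢ > 0`, then `v = 0`. -/
theorem shaped_force_vanishes_only_at_origin {n : ℕ} (hn : 1 ≤ n)
    (KI : Matrix (Fin n) (Fin n) ℝ) (hKI : KI.PosDef)
    (k μ : Fin n → ℝ) (hk : ∀ i, 0 ≤ k i) (hμ : ∀ i, 0 < μ i)
    (v : Fin n → ℝ)
    (hv : KI *ᵥ v + ∑ i, (k i * Real.tanh (μ i * v i)) • (Pi.single i 1 : Fin n → ℝ) = 0) :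
    v = 0 :=
  shaped_force_vanishes_only_at_origin_general KI hKI k μ hk hμ v hv
end

section
/- Let L := [[0_{n×n}, −φ_Mᵀ φ_M], [φ_Pᵀ φ_P, R φ_Mᵀ φ_M]] ∈ ℝ^{2n×2n} (the linearized closed-loop matrix, with M⋆⁻¹ = φ_Mᵀ φ_M and K_I + μK_Z = φ_Pᵀ φ_P) and let T := [[0_{n×n}, φ_M], [φ_P, 0_{n×n}]]. Then T is invertible and T L T⁻¹ = N, i.e., T L = N T, where N := [[φ_M R φ_Mᵀ, φ_M φ_Pᵀ], [−φ_P φ_Mᵀ, 0_{n×n}]]. Hence the linearized closed-loop matrix is similar to the saddle-point matrix N. -/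
open Matrix

/-- with `L = [[0, −φ_Mᵀφ_M],[φ_Pᵀφ_P, R φ_Mᵀφ_M]]` (the linearized
closed-loop matrix) and `T = [[0, φ_M],[φ_P, 0]]`, the matrix `T` is invertible and
`T L T⁻¹ = N`, i.e. `T L = N T`, where `N` is the saddle-point matrix
`[[φ_M R φ_Mᵀ, φ_M φ_Pᵀ],[−φ_P φ_Mᵀ, 0]]`. -/
theorem linearization_similar_to_saddle_point {n : ℕ} (hn : 1 ≤ n)
    (φM φP R : Matrix (Fin n) (Fin n) ℝ)
    (hφM : IsUnit φM) (hφP : IsUnit φP)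
    (L : Matrix (Fin n ⊕ Fin n) (Fin n ⊕ Fin n) ℝ)
    (hL : L = Matrix.fromBlocks 0 (-(φMᵀ * φM)) (φPᵀ * φP) (R * (φMᵀ * φM)))
    (T : Matrix (Fin n ⊕ Fin n) (Fin n ⊕ Fin n) ℝ)
    (hT : T = Matrix.fromBlocks 0 φM φP 0)
    (N : Matrix (Fin n ⊕ Fin n) (Fin n ⊕ Fin n) ℝ)
    (hN : N = Matrix.fromBlocks (φM * R * φMᵀ) (φM * φPᵀ) (-(φP * φMᵀ)) 0) :
    IsUnit T ∧ T * L * T⁻¹ = N ∧ T * L = N * T := by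
  have hMinv : φM * φM⁻¹ = 1 := mul_nonsing_inv _ ((isUnit_iff_isUnit_det _).mp hφM)
  have hPinv : φP * φP⁻¹ = 1 := mul_nonsing_inv _ ((isUnit_iff_isUnit_det _).mp hφP)
  have hTinv : T * Matrix.fromBlocks 0 φP⁻¹ φM⁻¹ 0 = 1 := by
    rw [hT, Matrix.fromBlocks_multiply]
    simp [hMinv, hPinv, Matrix.fromBlocks_one]
  have hTu : IsUnit T := (isUnit_iff_isUnit_det T).mpr (Matrix.isUnit_det_of_right_inverse hTinv)
  have hMul : T * L = N * T := by
    rw [hT, hL, hN, Matrix.fromBlocks_multiply, Matrix.fromBlocks_multiply]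
    simp [mul_assoc]
  refine ⟨hTu, ?_, hMul⟩
  rw [hMul, mul_assoc, mul_nonsing_inv _ ((isUnit_iff_isUnit_det _).mp hTu), mul_one]
end

section
/- (Theorem 2) Let M⋆ ∈ ℝ^{n×n} be symmetric positive definite with M⋆⁻¹ = φ_Mᵀ φ_M, let P := φ_Pᵀ φ_P (so P is symmetric positive definite), and let R ∈ ℝ^{n×n} be symmetric positive definite. If 4·λ_max(P)·λ_max(M⋆) ≤ (λ_min(R))², then the spectrum of the saddle-point matrix N is real and positive: every eigenvalue λ ∈ ℂ of N (viewed as a complex matrix) satisfies Im(λ) = 0 and Re(λ) > 0. -/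
open Matrix

/-!
Write an eigenvector of `N` as `(x, y)`. Eliminating `y` from the two block rows gives
`λ² x = λ (φ_M R φ_Mᵀ) x - φ_M P φ_Mᵀ x`, and pairing with `x` turns this into the scalar quadratic
`c λ² - a λ + b = 0`, where, for `z = φ_Mᵀ x`, the coefficients `a = z* R z`, `b = z* P z` and
`c = ‖x‖² = z* M⋆ z` are real and positive. The Rayleigh bounds `a ≥ λ_min(R) ‖z‖²`,
`b ≤ λ_max(P) ‖z‖²`, `c ≤ λ_max(M⋆) ‖z‖²` and the hypothesis give `4 b c ≤ a²`, so both roots of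
the quadratic are real, and they are positive because `a, b, c > 0`.
-/

namespace Matrix

theorem star_dotProduct_mul_mul_conjTranspose_mulVec {R m n : Type*} [CommSemiring R]
    [StarRing R] [Fintype m] [Fintype n] (B : Matrix m n R) (Q : Matrix n n R) (x : m → R) :
    star x ⬝ᵥ (B * Q * Bᴴ) *ᵥ x = star (Bᴴ *ᵥ x) ⬝ᵥ Q *ᵥ (Bᴴ *ᵥ x) := by
  rw [← mulVec_mulVec, ← mulVec_mulVec, dotProduct_mulVec, star_mulVec,
    conjTranspose_conjTranspose]

section Rayleigh

variable {𝕜 n : Type*} [RCLike 𝕜] [Fintype n]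

theorem re_star_dotProduct_self (v : n → 𝕜) : RCLike.re (star v ⬝ᵥ v) = ∑ i, ‖v i‖ ^ 2 := by
  simp only [dotProduct, Pi.star_apply, map_sum, RCLike.star_def, RCLike.conj_mul,
    ← RCLike.ofReal_pow, RCLike.ofReal_re]

theorem re_star_dotProduct_self_pos {v : n → 𝕜} (hv : v ≠ 0) : 0 < RCLike.re (star v ⬝ᵥ v) := by
  obtain ⟨i, hi⟩ := Function.ne_iff.mp hv
  rw [re_star_dotProduct_self]
  exact Finset.sum_pos' (fun j _ => by positivity)
    ⟨i, Finset.mem_univ i, pow_pos (norm_pos_iff.mpr hi) 2⟩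

theorem re_star_dotProduct_diagonal_mulVec [DecidableEq n] (d : n → ℝ) (v : n → 𝕜) :
    RCLike.re (star v ⬝ᵥ diagonal (RCLike.ofReal ∘ d) *ᵥ v) = ∑ i, d i * ‖v i‖ ^ 2 := by
  simp only [dotProduct, Pi.star_apply, mulVec_diagonal, Function.comp_apply, map_sum,
    RCLike.star_def, mul_left_comm _ (RCLike.ofReal _), RCLike.conj_mul, RCLike.re_ofReal_mul,
    ← RCLike.ofReal_pow, RCLike.ofReal_re]

theorem star_dotProduct_self_eq_of_mem_unitaryGroup [DecidableEq n] {U : Matrix n n 𝕜}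
    (hU : U ∈ unitaryGroup n 𝕜) (v : n → 𝕜) : star v ⬝ᵥ v = star (Uᴴ *ᵥ v) ⬝ᵥ Uᴴ *ᵥ v := by
  simpa [← star_eq_conjTranspose, mem_unitaryGroup_iff.mp hU] using
    star_dotProduct_mul_mul_conjTranspose_mulVec U 1 v

theorem IsHermitian.ofReal_re_star_dotProduct_mulVec {A : Matrix n n 𝕜} (hA : A.IsHermitian)
    (v : n → 𝕜) : (RCLike.re (star v ⬝ᵥ A *ᵥ v) : 𝕜) = star v ⬝ᵥ A *ᵥ v :=
  RCLike.conj_eq_iff_re.mp (RCLike.conj_eq_iff_im.mpr (hA.im_star_dotProduct_mulVec_self v))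

variable [DecidableEq n] {A : Matrix n n 𝕜} (hA : A.IsHermitian)
include hA

theorem IsHermitian.re_star_dotProduct_mulVec_eq_sum (v : n → 𝕜) :
    RCLike.re (star v ⬝ᵥ A *ᵥ v) =
      ∑ i, hA.eigenvalues i * ‖((hA.eigenvectorUnitary : Matrix n n 𝕜)ᴴ *ᵥ v) i‖ ^ 2 := by
  conv_lhs => rw [hA.spectral_theorem, Unitary.conjStarAlgAut_apply, star_eq_conjTranspose,
    star_dotProduct_mul_mul_conjTranspose_mulVec, re_star_dotProduct_diagonal_mulVec]

theorem IsHermitian.re_star_dotProduct_self_eq_sum (v : n → 𝕜) :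
    RCLike.re (star v ⬝ᵥ v) = ∑ i, ‖((hA.eigenvectorUnitary : Matrix n n 𝕜)ᴴ *ᵥ v) i‖ ^ 2 := by
  rw [star_dotProduct_self_eq_of_mem_unitaryGroup hA.eigenvectorUnitary.2, re_star_dotProduct_self]

theorem IsHermitian.re_star_dotProduct_mulVec_le {c : ℝ} (hc : ∀ i, hA.eigenvalues i ≤ c)
    (v : n → 𝕜) : RCLike.re (star v ⬝ᵥ A *ᵥ v) ≤ c * RCLike.re (star v ⬝ᵥ v) := by
  rw [hA.re_star_dotProduct_mulVec_eq_sum, hA.re_star_dotProduct_self_eq_sum, Finset.mul_sum]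
  gcongr with i
  exact hc i

theorem IsHermitian.le_re_star_dotProduct_mulVec {c : ℝ} (hc : ∀ i, c ≤ hA.eigenvalues i)
    (v : n → 𝕜) : c * RCLike.re (star v ⬝ᵥ v) ≤ RCLike.re (star v ⬝ᵥ A *ᵥ v) := by
  rw [hA.re_star_dotProduct_mulVec_eq_sum, hA.re_star_dotProduct_self_eq_sum, Finset.mul_sum]
  gcongr with i
  exact hc i

end Rayleigh

section Complexification

variable {l m n : Type*}

theorem map_ofReal_transpose (A : Matrix m n ℝ) :
    Aᵀ.map Complex.ofReal = (A.map Complex.ofReal)ᴴ := by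
  ext i j
  simp

theorem IsHermitian.map_ofReal {A : Matrix n n ℝ} (hA : A.IsHermitian) :
    (A.map Complex.ofReal).IsHermitian :=
  hA.map _ fun _ => by simp

variable [Fintype n]

theorem map_ofReal_mul (A : Matrix m n ℝ) (B : Matrix n l ℝ) :
    (A * B).map Complex.ofReal = A.map Complex.ofReal * B.map Complex.ofReal :=
  Matrix.map_mul (f := Complex.ofRealHom)

variable [DecidableEq n]

theorem isUnit_map_ofReal {A : Matrix n n ℝ} (hA : IsUnit A) :
    IsUnit (A.map Complex.ofReal) :=
  hA.map Complex.ofRealHom.mapMatrix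

variable {A : Matrix n n ℝ} (hA : A.IsHermitian)
include hA

theorem IsHermitian.eigenvalues_map_ofReal_mem_range (i : n) :
    hA.map_ofReal.eigenvalues i ∈ Set.range hA.eigenvalues := by
  rw [← hA.spectrum_real_eq_range_eigenvalues]
  exact AlgHom.spectrum_apply_subset (Algebra.ofId ℝ ℂ).mapMatrix A
    (hA.map_ofReal.eigenvalues_mem_spectrum_real i)

theorem IsHermitian.re_star_dotProduct_map_ofReal_mulVec_le (v : n → ℂ) :
    (star v ⬝ᵥ A.map Complex.ofReal *ᵥ v).re ≤ (⨆ i, hA.eigenvalues i) * (star v ⬝ᵥ v).re := by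
  refine hA.map_ofReal.re_star_dotProduct_mulVec_le (fun i => ?_) v
  obtain ⟨j, hj⟩ := hA.eigenvalues_map_ofReal_mem_range i
  exact hj ▸ le_ciSup (Set.finite_range _).bddAbove j

theorem IsHermitian.le_re_star_dotProduct_map_ofReal_mulVec (v : n → ℂ) :
    (⨅ i, hA.eigenvalues i) * (star v ⬝ᵥ v).re ≤ (star v ⬝ᵥ A.map Complex.ofReal *ᵥ v).re := by
  refine hA.map_ofReal.le_re_star_dotProduct_mulVec (fun i => ?_) v
  obtain ⟨j, hj⟩ := hA.eigenvalues_map_ofReal_mem_range i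
  exact hj ▸ ciInf_le (Set.finite_range _).bddBelow j

end Complexification

section PosDef

variable {n : Type*} [Fintype n] [DecidableEq n] {A : Matrix n n ℝ}

theorem PosDef.iInf_eigenvalues_pos [Nonempty n] (hA : A.PosDef) :
    0 < ⨅ i, hA.1.eigenvalues i := by
  obtain ⟨i, hi⟩ := exists_eq_ciInf_of_finite (f := hA.1.eigenvalues)
  exact hi ▸ hA.eigenvalues_pos i

theorem PosDef.re_star_dotProduct_map_ofReal_mulVec_pos (hA : A.PosDef) {v : n → ℂ}
    (hv : v ≠ 0) : 0 < (star v ⬝ᵥ A.map Complex.ofReal *ᵥ v).re := by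
  have : Nonempty n := ⟨(Function.ne_iff.mp hv).choose⟩
  exact (mul_pos hA.iInf_eigenvalues_pos (re_star_dotProduct_self_pos hv)).trans_le
    (hA.1.le_re_star_dotProduct_map_ofReal_mulVec v)

end PosDef

theorem mul_mul_eq_one_of_inv_eq_mul {K n : Type*} [CommRing K] [Fintype n] [DecidableEq n]
    {M B C : Matrix n n K} (hM : IsUnit M) (h : M⁻¹ = B * C) : C * M * B = 1 := by
  rw [Matrix.mul_assoc, mul_eq_one_comm, Matrix.mul_assoc, ← h,
    mul_nonsing_inv _ ((isUnit_iff_isUnit_det M).mp hM)]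

section SaddlePoint

variable {K l m n : Type*} [CommRing K] [Fintype m] [Fintype n] {lam : K}

theorem fromBlocks_mulVec_eq_smul_iff {A : Matrix n n K} {B : Matrix n m K} {C : Matrix m n K}
    {D : Matrix m m K} {w : n ⊕ m → K} :
    fromBlocks A B C D *ᵥ w = lam • w ↔
      A *ᵥ (w ∘ Sum.inl) + B *ᵥ (w ∘ Sum.inr) = lam • (w ∘ Sum.inl) ∧
        C *ᵥ (w ∘ Sum.inl) + D *ᵥ (w ∘ Sum.inr) = lam • (w ∘ Sum.inr) := by
  simp only [funext_iff, Sum.forall, fromBlocks_mulVec, Sum.elim_inl, Sum.elim_inr,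
    Pi.smul_apply, Function.comp_apply]

theorem inl_ne_zero_of_fromBlocks_mulVec_eq_smul {A : Matrix n n K} {B : Matrix n m K}
    {C : Matrix m n K} {D : Matrix m m K} {w : n ⊕ m → K} (hB : Function.Injective B.mulVec)
    (hw : w ≠ 0) (h : fromBlocks A B C D *ᵥ w = lam • w) : w ∘ Sum.inl ≠ 0 := by
  intro hx
  have hBy := (fromBlocks_mulVec_eq_smul_iff.mp h).1
  rw [hx, mulVec_zero, zero_add, smul_zero, ← B.mulVec_zero] at hBy
  exact hw (by rw [← Sum.elim_comp_inl_inr w, hx, hB hBy, Sum.elim_zero_zero])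

theorem smul_mulVec_sub_mul_mulVec_eq_of_fromBlocks {A : Matrix n n K} {B : Matrix n m K}
    {C : Matrix m n K} {w : n ⊕ m → K} (h : fromBlocks A B (-C) 0 *ᵥ w = lam • w) :
    lam • (A *ᵥ (w ∘ Sum.inl)) - (B * C) *ᵥ (w ∘ Sum.inl) = lam ^ 2 • (w ∘ Sum.inl) := by
  obtain ⟨h₁, h₂⟩ := fromBlocks_mulVec_eq_smul_iff.mp h
  rw [neg_mulVec, zero_mulVec, add_zero] at h₂
  rw [sq, ← smul_smul, ← h₁, smul_add, ← mulVec_smul B, ← h₂, mulVec_neg, mulVec_mulVec]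
  abel

variable [StarRing K] [Fintype l] [DecidableEq n]

theorem saddle_point_quadratic {Φ : Matrix n l K} {Ψ : Matrix m l K} {Q M : Matrix l l K}
    (hM : Φ * M * Φᴴ = 1) {w : n ⊕ m → K}
    (h : fromBlocks (Φ * Q * Φᴴ) (Φ * Ψᴴ) (-(Ψ * Φᴴ)) 0 *ᵥ w = lam • w) :
    (star (Φᴴ *ᵥ (w ∘ Sum.inl)) ⬝ᵥ M *ᵥ (Φᴴ *ᵥ (w ∘ Sum.inl))) * lam ^ 2
      - (star (Φᴴ *ᵥ (w ∘ Sum.inl)) ⬝ᵥ Q *ᵥ (Φᴴ *ᵥ (w ∘ Sum.inl))) * lam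
      + star (Φᴴ *ᵥ (w ∘ Sum.inl)) ⬝ᵥ (Ψᴴ * Ψ) *ᵥ (Φᴴ *ᵥ (w ∘ Sum.inl)) = 0 := by
  have key := congrArg (star (w ∘ Sum.inl) ⬝ᵥ ·) (smul_mulVec_sub_mul_mulVec_eq_of_fromBlocks h)
  have hBC : Φ * Ψᴴ * (Ψ * Φᴴ) = Φ * (Ψᴴ * Ψ) * Φᴴ := by simp only [Matrix.mul_assoc]
  simp only [dotProduct_sub, dotProduct_smul, smul_eq_mul, hBC,
    star_dotProduct_mul_mul_conjTranspose_mulVec] at key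
  rw [← star_dotProduct_mul_mul_conjTranspose_mulVec Φ M, hM, one_mulVec]
  linear_combination -key

end SaddlePoint

end Matrix

theorem Complex.im_eq_zero_and_re_pos_of_quadratic {a b c : ℝ} {z : ℂ} (hc : 0 < c) (ha : 0 < a)
    (hb : 0 < b) (hdisc : 4 * b * c ≤ a ^ 2) (h : c * z ^ 2 - a * z + b = 0) :
    z.im = 0 ∧ 0 < z.re := by
  have hre : c * (z.re ^ 2 - z.im ^ 2) - a * z.re + b = 0 := by
    simpa [sq] using congrArg Complex.re h
  have him : z.im * (2 * c * z.re - a) = 0 := by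
    have := congrArg Complex.im h
    simp only [sq, add_im, sub_im, mul_im, ofReal_re, ofReal_im, mul_re, zero_mul, add_zero,
      zero_im] at this
    linear_combination this
  -- A non-real root has real part `a / 2c`, and then `4 c² (im z)² = 4 b c - a² ≤ 0`.
  have him0 : z.im = 0 := by
    by_contra hv
    have hu : 2 * c * z.re = a := by linarith [(mul_eq_zero.mp him).resolve_left hv]
    nlinarith [mul_pos (mul_pos hc hc) (sq_pos_of_ne_zero hv)]
  refine ⟨him0, ?_⟩
  rw [him0] at hre
  nlinarith

theorem Matrix.PosDef.im_eq_zero_and_re_pos_of_quadratic_forms {n : Type*} [Fintype n]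
    [DecidableEq n] {R P M : Matrix n n ℝ} (hR : R.PosDef) (hP : P.PosDef) (hM : M.PosDef)
    (hcond : 4 * (⨆ i, hP.1.eigenvalues i) * (⨆ i, hM.1.eigenvalues i)
      ≤ (⨅ i, hR.1.eigenvalues i) ^ 2)
    {z : n → ℂ} (hz : z ≠ 0) {lam : ℂ}
    (h : (star z ⬝ᵥ M.map Complex.ofReal *ᵥ z) * lam ^ 2
      - (star z ⬝ᵥ R.map Complex.ofReal *ᵥ z) * lam + star z ⬝ᵥ P.map Complex.ofReal *ᵥ z = 0) :
    lam.im = 0 ∧ 0 < lam.re := by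
  rw [← hR.1.map_ofReal.ofReal_re_star_dotProduct_mulVec,
    ← hP.1.map_ofReal.ofReal_re_star_dotProduct_mulVec,
    ← hM.1.map_ofReal.ofReal_re_star_dotProduct_mulVec] at h
  have hb₀ := hP.re_star_dotProduct_map_ofReal_mulVec_pos hz
  have hc₀ := hM.re_star_dotProduct_map_ofReal_mulVec_pos hz
  refine Complex.im_eq_zero_and_re_pos_of_quadratic hc₀
    (hR.re_star_dotProduct_map_ofReal_mulVec_pos hz) hb₀ ?_ h
  have : Nonempty n := ⟨(Function.ne_iff.mp hz).choose⟩
  have hs := re_star_dotProduct_self_pos hz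
  have ha := hR.1.le_re_star_dotProduct_map_ofReal_mulVec z
  have hb := hP.1.re_star_dotProduct_map_ofReal_mulVec_le z
  have hc := hM.1.re_star_dotProduct_map_ofReal_mulVec_le z
  have hR₀ := hR.iInf_eigenvalues_pos
  calc _ ≤ 4 * ((⨆ i, hP.1.eigenvalues i) * (star z ⬝ᵥ z).re)
          * ((⨆ i, hM.1.eigenvalues i) * (star z ⬝ᵥ z).re) := by gcongr; linarith
    _ = 4 * (⨆ i, hP.1.eigenvalues i) * (⨆ i, hM.1.eigenvalues i) * (star z ⬝ᵥ z).re ^ 2 := by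
        ring
    _ ≤ ((⨅ i, hR.1.eigenvalues i) * (star z ⬝ᵥ z).re) ^ 2 := by rw [mul_pow]; gcongr
    _ ≤ _ := by gcongr

theorem saddle_point_spectrum_real_positive_general {n : ℕ}
    (φM φP R : Matrix (Fin n) (Fin n) ℝ)
    (hφM : IsUnit φM) (hφP : IsUnit φP) (hR : R.PosDef)
    (Mstar : Matrix (Fin n) (Fin n) ℝ) (hMstar : Mstar.PosDef)
    (hMinv : Mstar⁻¹ = φMᵀ * φM)
    (P : Matrix (Fin n) (Fin n) ℝ) (hPdef : P = φPᵀ * φP) (hP : P.PosDef)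
    (N : Matrix (Fin n ⊕ Fin n) (Fin n ⊕ Fin n) ℝ)
    (hN : N = Matrix.fromBlocks (φM * R * φMᵀ) (φM * φPᵀ) (-(φP * φMᵀ)) 0)
    (hcond : 4 * (⨆ i, hP.1.eigenvalues i) * (⨆ i, hMstar.1.eigenvalues i)
      ≤ (⨅ i, hR.1.eigenvalues i) ^ 2) :
    ∀ (lam : ℂ) (w : (Fin n ⊕ Fin n) → ℂ), w ≠ 0 →
      (N.map (Complex.ofReal)) *ᵥ w = lam • w →
      lam.im = 0 ∧ 0 < lam.re := by
  intro lam w hw hmv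
  set Φ : Matrix (Fin n) (Fin n) ℂ := φM.map Complex.ofReal with hΦ
  set Ψ : Matrix (Fin n) (Fin n) ℂ := φP.map Complex.ofReal with hΨ
  have hNc : N.map Complex.ofReal =
      fromBlocks (Φ * R.map Complex.ofReal * Φᴴ) (Φ * Ψᴴ) (-(Ψ * Φᴴ)) 0 := by
    simp [hN, hΦ, hΨ, fromBlocks_map, map_ofReal_mul, map_ofReal_transpose, Matrix.map_neg]
  have hMstar' : Φ * Mstar.map Complex.ofReal * Φᴴ = 1 := by
    rw [hΦ, ← map_ofReal_transpose, ← map_ofReal_mul, ← map_ofReal_mul,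
      mul_mul_eq_one_of_inv_eq_mul hMstar.isUnit hMinv,
      Matrix.map_one _ Complex.ofReal_zero Complex.ofReal_one]
  have hP' : P.map Complex.ofReal = Ψᴴ * Ψ := by
    rw [hPdef, map_ofReal_mul, map_ofReal_transpose]
  rw [hNc] at hmv
  have hx := inl_ne_zero_of_fromBlocks_mulVec_eq_smul (mulVec_injective_iff_isUnit.mpr
    ((isUnit_map_ofReal hφM).mul (isUnit_map_ofReal hφP).star)) hw hmv
  have hΦu : IsUnit Φᴴ := (isUnit_map_ofReal hφM).star
  have hz : Φᴴ *ᵥ (w ∘ Sum.inl) ≠ 0 := by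
    simpa using (mulVec_injective_iff_isUnit.mpr hΦu).ne hx
  refine hR.im_eq_zero_and_re_pos_of_quadratic_forms hP hMstar hcond hz ?_
  rw [hP']
  exact saddle_point_quadratic hMstar' hmv

/-- Theorem 2: let `M⋆ ≻ 0` with `M⋆⁻¹ = φ_Mᵀ φ_M`, `P = φ_Pᵀ φ_P ≻ 0`,
and `R ≻ 0`. If `4 λ_max(P) λ_max(M⋆) ≤ λ_min(R)²`, then every eigenvalue of the
saddle-point matrix `N = [[φ_M R φ_Mᵀ, φ_M φ_Pᵀ],[−φ_P φ_Mᵀ, 0]]` is real and positive. -/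
theorem saddle_point_spectrum_real_positive {n : ℕ} (hn : 1 ≤ n)
    (φM φP R : Matrix (Fin n) (Fin n) ℝ)
    (hφM : IsUnit φM) (hφP : IsUnit φP) (hR : R.PosDef)
    (Mstar : Matrix (Fin n) (Fin n) ℝ) (hMstar : Mstar.PosDef)
    (hMinv : Mstar⁻¹ = φMᵀ * φM)
    (P : Matrix (Fin n) (Fin n) ℝ) (hPdef : P = φPᵀ * φP) (hP : P.PosDef)
    (N : Matrix (Fin n ⊕ Fin n) (Fin n ⊕ Fin n) ℝ)
    (hN : N = Matrix.fromBlocks (φM * R * φMᵀ) (φM * φPᵀ) (-(φP * φMᵀ)) 0)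
    (hcond : 4 * (⨆ i, hP.1.eigenvalues i) * (⨆ i, hMstar.1.eigenvalues i)
      ≤ (⨅ i, hR.1.eigenvalues i) ^ 2) :
    ∀ (lam : ℂ) (w : (Fin n ⊕ Fin n) → ℂ), w ≠ 0 →
      (N.map (Complex.ofReal)) *ᵥ w = lam • w →
      lam.im = 0 ∧ 0 < lam.re :=
  saddle_point_spectrum_real_positive_general φM φP R hφM hφP hR Mstar hMstar hMinv P hPdef hP N hN
    hcond
end
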